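/- Let F be a subset of the ball B_r(x) in ℝ^m and k ≥ 1. If F does not (rρ)-span any k-dimensional affine subspace, then F is contained in the (ρr)-neighborhood of some affine subspace of dimension at most k-1. -/

import Mathlib

/-!
Choose points of `F` greedily, each at distance at least `rρ` from the affine span of the
previous ones. If `k + 1` points can never be chosen, the process stops after at most `k`
points, and then every point of `F` lies within `rρ` of their affine span, whose dimension is
at most `k - 1`.
-/

open Metric Module Set

theorem image_add_span_sub_eq_affineSpan {R E ι : Type*} [Ring R] [AddCommGroup E] [Module R E]
    (p : ι → E) {s : Set ι} {i₀ : ι} (h : i₀ ∈ s) :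
    (p i₀ + ·) '' (Submodule.span R ((fun j => p j - p i₀) '' s) : Set E) =
      affineSpan R (p '' s) := by
  ext z
  rw [SetLike.mem_coe, ← AffineSubspace.vsub_right_mem_direction_iff_mem
      (mem_affineSpan R (mem_image_of_mem p h)),
    direction_affineSpan, vectorSpan_eq_span_vsub_set_right R (mem_image_of_mem p h), image_image,
    image_add_left, mem_preimage, neg_add_eq_sub]
  rfl

theorem Fin.Iio_last_eq_range_castSucc (n : ℕ) : Iio (Fin.last n) = range Fin.castSucc := by
  ext i; simp [Fin.range_castSucc, Fin.lt_def]

section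

variable {V P : Type*} [NormedAddCommGroup V] [NormedSpace ℝ V] [MetricSpace P]
  [NormedAddTorsor V P]

/-- The paper's `δ`-linear independence of an ordered tuple `p 0, …, p n`. -/
def IsAffinelySeparated (δ : ℝ) {n : ℕ} (p : Fin (n + 1) → P) : Prop :=
  ∀ i, 0 < i → δ ≤ infDist (p i) (affineSpan ℝ (p '' Iio i))

theorem IsAffinelySeparated.snoc {δ : ℝ} {n : ℕ} {p : Fin (n + 1) → P}
    (hp : IsAffinelySeparated δ p) {y : P} (hy : δ ≤ infDist y (affineSpan ℝ (range p))) :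
    IsAffinelySeparated δ (Fin.snoc p y : Fin (n + 2) → P) := by
  intro i
  induction i using Fin.lastCases with
  | last =>
    intro _
    rwa [Fin.snoc_last, Fin.Iio_last_eq_range_castSucc, ← range_comp, Fin.snoc_comp_castSucc]
  | cast i =>
    intro hi
    rw [Fin.snoc_castSucc, ← Fin.image_castSucc_Iio, image_image]
    simp only [Fin.snoc_castSucc]
    exact hp i (by simpa using hi)

theorem exists_isAffinelySeparated_or_forall_infDist_lt (δ : ℝ) {F : Set P} (hF : F.Nonempty)
    (n : ℕ) :
    (∃ p : Fin (n + 1) → P, (∀ i, p i ∈ F) ∧ IsAffinelySeparated δ p) ∨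
      ∃ L : AffineSubspace ℝ P, (L : Set P).Nonempty ∧ finrank ℝ L.direction < n ∧
        ∀ y ∈ F, infDist y L < δ := by
  induction n with
  | zero =>
    obtain ⟨y, hy⟩ := hF
    refine .inl ⟨fun _ => y, fun _ => hy, fun i hi => ?_⟩
    exact absurd hi (by simp [Fin.fin_one_eq_zero i])
  | succ n ih =>
    obtain ⟨p, hpF, hp⟩ | ⟨L, hL, hdim, hnear⟩ := ih
    · by_cases hnear : ∀ y ∈ F, infDist y (affineSpan ℝ (range p)) < δ
      · refine .inr ⟨affineSpan ℝ (range p), (range_nonempty p).mono (subset_affineSpan ℝ _),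
          ?_, hnear⟩
        rw [direction_affineSpan]
        exact Nat.lt_succ_of_le (finrank_vectorSpan_range_le ℝ p (Fintype.card_fin _))
      · push Not at hnear
        obtain ⟨y, hyF, hy⟩ := hnear
        exact .inl ⟨Fin.snoc p y, Fin.lastCases (by simpa using hyF) (by simpa using hpF),
          hp.snoc hy⟩
    · exact .inr ⟨L, hL, hdim.trans (Nat.lt_succ_self n), hnear⟩

end

theorem stmt_2_general {m : ℕ} (k : ℕ)
    (r ρ : ℝ)
    (F : Set (EuclideanSpace ℝ (Fin m)))
    (hspan : ¬ ∃ p : Fin (k + 1) → EuclideanSpace ℝ (Fin m),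
      (∀ i, p i ∈ F) ∧
      ∀ i : Fin (k + 1), 0 < (i : ℕ) →
        r * ρ ≤ infDist (p i)
          ((fun v => p 0 + v) ''
            (Submodule.span ℝ ((fun j : Fin (k + 1) => p j - p 0) ''
              {j : Fin (k + 1) | (j : ℕ) < (i : ℕ)}) : Set (EuclideanSpace ℝ (Fin m))))) :
    ∃ L : AffineSubspace ℝ (EuclideanSpace ℝ (Fin m)),
      (L : Set (EuclideanSpace ℝ (Fin m))).Nonempty ∧
      finrank ℝ L.direction ≤ k - 1 ∧
      ∀ y ∈ F, infDist y (L : Set (EuclideanSpace ℝ (Fin m))) ≤ ρ * r := by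
  rcases F.eq_empty_or_nonempty with rfl | hF
  · refine ⟨affineSpan ℝ {0}, by simp, ?_, by simp⟩
    rw [direction_affineSpan, vectorSpan_singleton, finrank_bot]
    exact Nat.zero_le _
  obtain ⟨p, hpF, hp⟩ | ⟨L, hL, hdim, hnear⟩ :=
    exists_isAffinelySeparated_or_forall_infDist_lt (r * ρ) hF k
  · refine absurd ⟨p, hpF, fun i hi => ?_⟩ hspan
    rw [image_add_span_sub_eq_affineSpan (R := ℝ) p (s := {j | (j : ℕ) < i}) (i₀ := 0) hi]
    exact hp i hi
  · exact ⟨L, hL, by omega, fun y hy => mul_comm r ρ ▸ (hnear y hy).le⟩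

/-- If `F ⊆ B_r(x)` does not `(rρ)`-span any `k`-dimensional affine subspace
(i.e. contains no `(rρ)`-linearly independent `(k+1)`-tuple), then `F` is contained
in the `(ρr)`-neighborhood of some affine subspace of dimension at most `k-1`. -/
theorem stmt_2 {m : ℕ} (k : ℕ) (hk : 1 ≤ k)
    (x : EuclideanSpace ℝ (Fin m)) (r ρ : ℝ) (hr : 0 < r) (hρ : 0 < ρ)
    (F : Set (EuclideanSpace ℝ (Fin m))) (hF : F ⊆ ball x r)
    (hspan : ¬ ∃ p : Fin (k + 1) → EuclideanSpace ℝ (Fin m),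
      (∀ i, p i ∈ F) ∧
      ∀ i : Fin (k + 1), 0 < (i : ℕ) →
        r * ρ ≤ infDist (p i)
          ((fun v => p 0 + v) ''
            (Submodule.span ℝ ((fun j : Fin (k + 1) => p j - p 0) ''
              {j : Fin (k + 1) | (j : ℕ) < (i : ℕ)}) : Set (EuclideanSpace ℝ (Fin m))))) :
    ∃ L : AffineSubspace ℝ (EuclideanSpace ℝ (Fin m)),
      (L : Set (EuclideanSpace ℝ (Fin m))).Nonempty ∧
      finrank ℝ L.direction ≤ k - 1 ∧
      ∀ y ∈ F, infDist y (L : Set (EuclideanSpace ℝ (Fin m))) ≤ ρ * r :=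
  stmt_2_general k r ρ F hspan
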